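/- Let K be a perfect field with char K ≠ 2, (V, σ) a 2n-dimensional symplectic K-vector space, and f : V → V a self-adjoint operator. Then there exist an n-dimensional subspace U of V, an identification Φ of the symplectic space (U × U*, ω) with (V, σ) (where ω((v,λ),(w,μ)) = λ(w) − μ(v)), and a linear map l : U → U such that Φ ∘ (l, l*) = f ∘ Φ; i.e., f is symplectically conjugate to the operator (v,λ) ↦ (l(v), l*(λ)). -/

import Mathlib

/-- The canonical symplectic form on `U × U*`: `ω((v,λ),(w,μ)) = λ(w) − μ(v)`. -/
def omegaForm (K U : Type*) [Field K] [AddCommGroup U] [Module K U] :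
    LinearMap.BilinForm K (U × Module.Dual K U) :=
  LinearMap.mk₂ K (fun p q => p.2 q.1 - q.2 p.1)
    (by intro m₁ m₂ n; simp [map_add]; ring)
    (by intro c m n; simp [map_smul, smul_eq_mul]; ring)
    (by intro m n₁ n₂; simp [map_add]; ring)
    (by intro c m n; simp [map_smul, smul_eq_mul]; ring)

/-- A Darboux basis: `σ(uᵢ,uⱼ)=0`, `σ(wᵢ,wⱼ)=0`, `σ(wᵢ,uⱼ)=δᵢⱼ`, where
`uᵢ = b (Sum.inl i)` and `wᵢ = b (Sum.inr i)`. -/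
def IsDarbouxBasis {K V : Type*} [Field K] [AddCommGroup V] [Module K V] {n : ℕ}
    (σ : LinearMap.BilinForm K V) (b : Module.Basis (Fin n ⊕ Fin n) K V) : Prop :=
  (∀ i j, σ (b (Sum.inl i)) (b (Sum.inl j)) = 0) ∧
  (∀ i j, σ (b (Sum.inr i)) (b (Sum.inr j)) = 0) ∧
  (∀ i j, σ (b (Sum.inr i)) (b (Sum.inl j)) = if i = j then 1 else 0)

/-!
For self-adjoint `f`, `σ (f^i v) (f^j v) = σ v (f^(i+j) v)` is both symmetric and alternating in
`(i, j)`, so every cyclic subspace `K[f] v` is isotropic. Take `v` whose cyclic subspace has the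
maximal dimension `d`, and `w` with `σ (f^i v) w = δ_{i,d-1}` for `i < d`. The Gram matrix of
`(f^i v)_{i<d}` against `(f^j w)_{j<d}` is anti-triangular with unit antidiagonal, hence
invertible; with maximality this makes `K[f] v ⊕ K[f] w` a nondegenerate `f`-invariant subspace
split into two invariant isotropic halves. Its orthogonal complement is again nondegenerate and
invariant, so induction on the dimension yields transversal `f`-invariant Lagrangians `L`, `L'`.
Finally `σ` identifies `L'` with `L*`, and `Φ (u, λ) = u + λ'`, with `λ' ∈ L'` representing
`λ`, conjugates `(f|_L, (f|_L)*)` to `f`.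
-/

open Module Submodule

theorem Disjoint.sup_sup_of_disjoint_sup {α : Type*} [Lattice α] [OrderBot α]
    [IsModularLattice α] {a b c d : α} (hab : Disjoint a b) (hcd : Disjoint c d)
    (h : Disjoint (a ⊔ b) (c ⊔ d)) : Disjoint (a ⊔ c) (b ⊔ d) := by
  have hacb : Disjoint (a ⊔ c) b :=
    (hab.symm.disjoint_sup_right_of_disjoint_sup_left
      ((sup_comm b a).symm ▸ h.mono_right le_sup_left)).symm
  exact hacb.disjoint_sup_right_of_disjoint_sup_left <| by
    rw [sup_right_comm]
    exact hcd.disjoint_sup_left_of_disjoint_sup_right h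

theorem Matrix.det_ne_zero_of_antitriangular {R : Type*} [CommRing R] [Nontrivial R] {d : ℕ}
    (M : Matrix (Fin d) (Fin d) R) (hlt : ∀ i j : Fin d, (i : ℕ) + j < d - 1 → M i j = 0)
    (hanti : ∀ i j : Fin d, (i : ℕ) + j = d - 1 → M i j = 1) : M.det ≠ 0 := by
  have hrev : (M.submatrix id Fin.revPerm).det = 1 := by
    rw [Matrix.det_of_isLowerTriangular]
    · refine Finset.prod_eq_one fun i _ => hanti _ _ ?_
      simp only [id, Fin.revPerm_apply, Fin.val_rev]
      omega
    · intro i j hij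
      have : (i : ℕ) < j := hij
      refine hlt _ _ ?_
      simp only [id, Fin.revPerm_apply, Fin.val_rev]
      omega
  intro h
  rw [Matrix.det_permute', h, mul_zero] at hrev
  exact zero_ne_one hrev

section CommRing

variable {R M : Type*} [CommRing R] [AddCommGroup M] [Module R M]

def cyclicSpan (f : Module.End R M) (v : M) : Submodule R M :=
  span R (Set.range fun k : ℕ => (f ^ k) v)

section CyclicSpan

variable (f : Module.End R M) (v : M)

theorem pow_apply_mem_cyclicSpan (k : ℕ) : (f ^ k) v ∈ cyclicSpan f v :=
  subset_span ⟨k, rfl⟩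

theorem self_mem_cyclicSpan : v ∈ cyclicSpan f v :=
  pow_apply_mem_cyclicSpan f v 0

theorem cyclicSpan_mem_invtSubmodule : cyclicSpan f v ∈ f.invtSubmodule := by
  rw [Module.End.mem_invtSubmodule_iff_map_le, cyclicSpan, map_span, span_le]
  rintro _ ⟨_, ⟨k, rfl⟩, rfl⟩
  rw [← Module.End.mul_apply, ← pow_succ']
  exact pow_apply_mem_cyclicSpan f v (k + 1)

theorem cyclicSpan_le {W : Submodule R M} (hW : W ∈ f.invtSubmodule) (hv : v ∈ W) :
    cyclicSpan f v ≤ W := by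
  refine span_le.2 ?_
  rintro _ ⟨k, rfl⟩
  induction k with
  | zero => simpa using hv
  | succ k ih => simpa [pow_succ'] using hW ih

end CyclicSpan

section Orthogonal

variable {σ : LinearMap.BilinForm R M} {f : Module.End R M} {L N P : Submodule R M}

theorem LinearMap.IsSelfAdjoint.pow (hf : σ.IsSelfAdjoint f) (k : ℕ) :
    σ.IsSelfAdjoint ⇑(f ^ k) := by
  induction k with
  | zero => exact LinearMap.isAdjointPair_one
  | succ k ih =>
    have := ih.mul hf
    rwa [← pow_mul_comm', ← pow_succ] at this

theorem orthogonal_mem_invtSubmodule (hf : σ.IsSelfAdjoint f) (hL : L ∈ f.invtSubmodule) :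
    σ.orthogonal L ∈ f.invtSubmodule := fun z hz w hw => by
  change σ w (f z) = 0
  rw [← hf w z]
  exact hz (f w) (hL hw)

theorem span_le_orthogonal_span {s t : Set M} (h : ∀ x ∈ s, ∀ y ∈ t, σ x y = 0) :
    span R t ≤ σ.orthogonal (span R s) :=
  span_le.2 fun y hy _ hx =>
    (span_le (p := LinearMap.ker (σ.flip y)).2 (fun x' hx' => h x' hx' y hy)) hx

theorem le_orthogonal_sup (hL : P ≤ σ.orthogonal L) (hN : P ≤ σ.orthogonal N) :
    P ≤ σ.orthogonal (L ⊔ N) := fun x hx n hn => by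
  obtain ⟨a, ha, b, hb, rfl⟩ := mem_sup.1 hn
  change σ (a + b) x = 0
  rw [map_add, LinearMap.add_apply, hL hx a ha, hN hx b hb, add_zero]

theorem sup_le_orthogonal_sup (hσ : σ.IsRefl) (hL : L ≤ σ.orthogonal L)
    (hN : N ≤ σ.orthogonal N) (hLN : N ≤ σ.orthogonal L) :
    L ⊔ N ≤ σ.orthogonal (L ⊔ N) :=
  sup_le (le_orthogonal_sup hL fun x hx _ hn => hσ _ _ (hLN hn x hx))
    (le_orthogonal_sup hLN hN)

theorem injective_domRestrict₁₂_of_isCompl (hσ : σ.SeparatingLeft) (hLN : IsCompl L N)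
    (hN : N ≤ σ.orthogonal N) : Function.Injective (σ.domRestrict₁₂ N L) := by
  refine (injective_iff_map_eq_zero _).2 fun y hy => Subtype.ext <| hσ y fun z => ?_
  obtain ⟨a, ha, b, hb, rfl⟩ := mem_sup.1 (hLN.sup_eq_top ▸ mem_top : z ∈ L ⊔ N)
  rw [map_add, ← LinearMap.domRestrict₁₂_apply σ N L y ⟨a, ha⟩, hy, hN hb y y.2,
    LinearMap.zero_apply, add_zero]

theorem map_subtype_le_orthogonal {O : Submodule R M} {Q : Submodule R O}
    (hQ : Q ≤ (σ.restrict O).orthogonal Q) :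
    Q.map O.subtype ≤ σ.orthogonal (Q.map O.subtype) := by
  rintro _ ⟨x, hx, rfl⟩ _ ⟨y, hy, rfl⟩
  exact hQ hx y hy

end Orthogonal

/-- When moreover `L ⊔ L' = ⊤` and `σ` is symplectic, `L` and `L'` are transversal
`f`-invariant Lagrangians. -/
structure IsInvariantIsotropicPair (σ : LinearMap.BilinForm R M) (f : Module.End R M)
    (L L' : Submodule R M) : Prop where
  disjoint : Disjoint L L'
  left_mem_invtSubmodule : L ∈ f.invtSubmodule
  right_mem_invtSubmodule : L' ∈ f.invtSubmodule
  left_le_orthogonal : L ≤ σ.orthogonal L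
  right_le_orthogonal : L' ≤ σ.orthogonal L'

namespace IsInvariantIsotropicPair

variable {σ : LinearMap.BilinForm R M} {f : Module.End R M}

theorem bot : IsInvariantIsotropicPair σ f ⊥ ⊥ :=
  ⟨disjoint_bot_left, Module.End.invtSubmodule.bot_mem f, Module.End.invtSubmodule.bot_mem f,
    bot_le, bot_le⟩

theorem of_disjoint_orthogonal {L L' : Submodule R M} (hL : L ∈ f.invtSubmodule)
    (hL' : L' ∈ f.invtSubmodule) (hLL : L ≤ σ.orthogonal L) (hL'L' : L' ≤ σ.orthogonal L')
    (h : Disjoint (L ⊔ L') (σ.orthogonal (L ⊔ L'))) : IsInvariantIsotropicPair σ f L L' where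
  disjoint := disjoint_def.2 fun x hxL hxL' =>
    disjoint_def.1 h x (mem_sup_left hxL) <| le_orthogonal_sup (inf_le_left.trans hLL)
      (inf_le_right.trans hL'L') (mem_inf.2 ⟨hxL, hxL'⟩)
  left_mem_invtSubmodule := hL
  right_mem_invtSubmodule := hL'
  left_le_orthogonal := hLL
  right_le_orthogonal := hL'L'

theorem map_subtype {O : Submodule R M} (hO : O ∈ f.invtSubmodule) {L L' : Submodule R O}
    (h : IsInvariantIsotropicPair (σ.restrict O) (f.restrict hO) L L') :
    IsInvariantIsotropicPair σ f (L.map O.subtype) (L'.map O.subtype) where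
  disjoint := by
    rw [disjoint_iff, ← map_inf _ O.injective_subtype, h.disjoint.eq_bot, Submodule.map_bot]
  left_mem_invtSubmodule :=
    Module.End.invtSubmodule.map_subtype_mem_of_mem_invtSubmodule f hO h.left_mem_invtSubmodule
  right_mem_invtSubmodule :=
    Module.End.invtSubmodule.map_subtype_mem_of_mem_invtSubmodule f hO h.right_mem_invtSubmodule
  left_le_orthogonal := map_subtype_le_orthogonal h.left_le_orthogonal
  right_le_orthogonal := map_subtype_le_orthogonal h.right_le_orthogonal

theorem sup (hσ : σ.IsRefl) {C C' D D' : Submodule R M} (hC : IsInvariantIsotropicPair σ f C C')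
    (hD : IsInvariantIsotropicPair σ f D D') (hCD : Disjoint (C ⊔ C') (D ⊔ D'))
    (horth : D ⊔ D' ≤ σ.orthogonal (C ⊔ C')) :
    IsInvariantIsotropicPair σ f (C ⊔ D) (C' ⊔ D') where
  disjoint := hC.disjoint.sup_sup_of_disjoint_sup hD.disjoint hCD
  left_mem_invtSubmodule := Module.End.invtSubmodule.sup_mem hC.left_mem_invtSubmodule
    hD.left_mem_invtSubmodule
  right_mem_invtSubmodule := Module.End.invtSubmodule.sup_mem hC.right_mem_invtSubmodule
    hD.right_mem_invtSubmodule
  left_le_orthogonal := sup_le_orthogonal_sup hσ hC.left_le_orthogonal hD.left_le_orthogonal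
    ((le_sup_left.trans horth).trans (σ.orthogonal_le le_sup_left))
  right_le_orthogonal := sup_le_orthogonal_sup hσ hC.right_le_orthogonal hD.right_le_orthogonal
    ((le_sup_right.trans horth).trans (σ.orthogonal_le le_sup_right))

end IsInvariantIsotropicPair

end CommRing

section Field

variable {K V : Type*} [Field K] [AddCommGroup V] [Module K V]

def IsAntitriangularPairing (σ : LinearMap.BilinForm K V) {d : ℕ} (x y : Fin d → V) : Prop :=
  (∀ i j : Fin d, (i : ℕ) + j < d - 1 → σ (x i) (y j) = 0) ∧
    ∀ i j : Fin d, (i : ℕ) + j = d - 1 → σ (x i) (y j) = 1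

namespace IsAntitriangularPairing

variable {σ : LinearMap.BilinForm K V} {d : ℕ} {x y : Fin d → V}

theorem flip (h : IsAntitriangularPairing σ x y) : IsAntitriangularPairing σ.flip y x :=
  ⟨fun i j hij => h.1 j i (by omega), fun i j hij => h.2 j i (by omega)⟩

theorem eq_zero_of_forall_apply_eq_zero (h : IsAntitriangularPairing σ x y) {a : Fin d → K}
    (ha : ∀ j, σ (∑ i, a i • x i) (y j) = 0) : a = 0 := by
  refine Matrix.eq_zero_of_vecMul_eq_zero
    (Matrix.det_ne_zero_of_antitriangular (.of fun i j => σ (x i) (y j)) h.1 h.2)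
    (funext fun j => ?_)
  simpa [Matrix.vecMul, dotProduct] using ha j

theorem linearIndependent_left (h : IsAntitriangularPairing σ x y) : LinearIndependent K x :=
  Fintype.linearIndependent_iff.2 fun a ha i =>
    congrFun (h.eq_zero_of_forall_apply_eq_zero (by simp [ha])) i

theorem eq_zero_of_mem_span_left (h : IsAntitriangularPairing σ x y) {c : V}
    (hc : c ∈ span K (Set.range x)) (hcy : ∀ j, σ c (y j) = 0) : c = 0 := by
  obtain ⟨a, rfl⟩ := (mem_span_range_iff_exists_fun K).1 hc
  simp [h.eq_zero_of_forall_apply_eq_zero hcy]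

end IsAntitriangularPairing

theorem cyclicSpan_le_orthogonal {σ : LinearMap.BilinForm K V} {f : Module.End K V}
    (hchar : (2 : K) ≠ 0) (hσ : σ.IsAlt) (hf : σ.IsSelfAdjoint f) (v : V) :
    cyclicSpan f v ≤ σ.orthogonal (cyclicSpan f v) := by
  refine span_le_orthogonal_span ?_
  rintro _ ⟨i, rfl⟩ _ ⟨j, rfl⟩
  have hsum : ∀ i j, σ ((f ^ i) v) ((f ^ j) v) = σ v ((f ^ (i + j)) v) := fun i j => by
    rw [(hf.pow i) v, ← Module.End.mul_apply, ← pow_add]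
  have hskew := hσ.neg_eq ((f ^ i) v) ((f ^ j) v)
  rw [hsum, hsum, add_comm j i] at hskew
  rw [hsum]
  exact (mul_eq_zero.1 (by linear_combination -hskew : (2 : K) * _ = 0)).resolve_left hchar

variable [FiniteDimensional K V]

theorem pow_apply_notMem_span_of_lt_finrank (f : Module.End K V) (v : V) {m : ℕ}
    (hm : m < finrank K (cyclicSpan f v)) :
    (f ^ m) v ∉ span K (Set.range fun i : Fin m => (f ^ (i : ℕ)) v) := by
  intro hmem
  set S := span K (Set.range fun i : Fin m => (f ^ (i : ℕ)) v)
  have hle : ∀ k ≤ m, (f ^ k) v ∈ S := fun k hk =>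
    hk.lt_or_eq.elim (fun hk => subset_span ⟨⟨k, hk⟩, rfl⟩) (· ▸ hmem)
  have hS : S ∈ f.invtSubmodule := by
    rw [Module.End.mem_invtSubmodule_iff_map_le, map_span, span_le]
    rintro _ ⟨_, ⟨i, rfl⟩, rfl⟩
    simpa [pow_succ'] using hle (i + 1) i.isLt
  have := Submodule.finrank_mono (cyclicSpan_le f v hS (by simpa using hle 0 m.zero_le))
  have : finrank K S ≤ m := by
    simpa [Set.finrank] using finrank_range_le_card (R := K) fun i : Fin m => (f ^ (i : ℕ)) v
  omega

theorem exists_forall_finrank_cyclicSpan_le (f : Module.End K V) :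
    ∃ v : V, ∀ w, finrank K (cyclicSpan f w) ≤ finrank K (cyclicSpan f v) := by
  have hbdd : BddAbove (Set.range fun w => finrank K (cyclicSpan f w)) :=
    ⟨finrank K V, by rintro _ ⟨w, rfl⟩; exact Submodule.finrank_le _⟩
  obtain ⟨v, hv⟩ := Nat.sSup_mem (Set.range_nonempty _) hbdd
  exact ⟨v, fun w => (le_csSup hbdd ⟨w, rfl⟩).trans_eq hv.symm⟩

variable {σ : LinearMap.BilinForm K V} {f : Module.End K V}

theorem finrank_cyclicSpan_pos {v : V} (hv : v ≠ 0) : 0 < finrank K (cyclicSpan f v) :=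
  Module.finrank_pos_iff_exists_ne_zero.2 ⟨⟨v, self_mem_cyclicSpan f v⟩, by simpa using hv⟩

theorem span_range_pow_apply_eq_cyclicSpan {d : ℕ} {v : V}
    (hli : LinearIndependent K fun i : Fin d => (f ^ (i : ℕ)) v)
    (hd : finrank K (cyclicSpan f v) ≤ d) :
    span K (Set.range fun i : Fin d => (f ^ (i : ℕ)) v) = cyclicSpan f v :=
  eq_of_le_of_finrank_le
    (span_le.2 <| by rintro _ ⟨i, rfl⟩; exact pow_apply_mem_cyclicSpan f v i)
    (by rwa [finrank_span_eq_card hli, Fintype.card_fin])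

theorem exists_isAntitriangularPairing_pow_apply (hnd : σ.Nondegenerate)
    (hf : σ.IsSelfAdjoint f) {v : V} (hd : 0 < finrank K (cyclicSpan f v)) :
    ∃ w : V, IsAntitriangularPairing σ
      (fun i : Fin (finrank K (cyclicSpan f v)) => (f ^ (i : ℕ)) v)
      (fun j => (f ^ (j : ℕ)) w) := by
  set d := finrank K (cyclicSpan f v)
  obtain ⟨φ, hφ, hφS⟩ := exists_dual_map_eq_bot_of_notMem
    (pow_apply_notMem_span_of_lt_finrank f v (Nat.sub_one_lt_of_lt hd)) inferInstance
  set c := φ ((f ^ (d - 1)) v)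
  set w := (σ.flip.toDual hnd.flip).symm (c⁻¹ • φ)
  have hval : ∀ i j : Fin d,
      σ ((f ^ (i : ℕ)) v) ((f ^ (j : ℕ)) w) = c⁻¹ * φ ((f ^ (i + j : ℕ)) v) := by
    intro i j
    rw [← hf.pow j, ← Module.End.mul_apply, ← pow_add, add_comm]
    exact LinearMap.BilinForm.apply_toDual_symm_apply (B := σ.flip) (hB := hnd.flip) _ _
  refine ⟨w, fun i j hij => ?_, fun i j hij => ?_⟩
  · have hmem : (f ^ (i + j : ℕ)) v ∈
        span K (Set.range fun k : Fin (d - 1) => (f ^ (k : ℕ)) v) :=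
      subset_span ⟨⟨_, hij⟩, rfl⟩
    rw [hval, LinearMap.mem_ker.1 (LinearMap.le_ker_iff_map.2 hφS hmem), mul_zero]
  · rw [hval, hij, inv_mul_cancel₀ hφ]

theorem disjoint_cyclicSpan_sup_orthogonal (hchar : (2 : K) ≠ 0) (hσ : σ.IsAlt)
    (hf : σ.IsSelfAdjoint f) {d : ℕ} {v w : V} (hv : finrank K (cyclicSpan f v) ≤ d)
    (hw : finrank K (cyclicSpan f w) ≤ d)
    (hpair : IsAntitriangularPairing σ (fun i : Fin d => (f ^ (i : ℕ)) v)
      (fun j => (f ^ (j : ℕ)) w)) :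
    Disjoint (cyclicSpan f v ⊔ cyclicSpan f w)
      (σ.orthogonal (cyclicSpan f v ⊔ cyclicSpan f w)) := by
  have hv_span := span_range_pow_apply_eq_cyclicSpan hpair.linearIndependent_left hv
  have hw_span := span_range_pow_apply_eq_cyclicSpan hpair.flip.linearIndependent_left hw
  refine disjoint_def.2 fun z hz hzo => ?_
  obtain ⟨c, hc, c', hc', rfl⟩ := mem_sup.1 hz
  have hc' : c' = 0 := hpair.flip.eq_zero_of_mem_span_left (hw_span ▸ hc') fun i => by
    have hxi := pow_apply_mem_cyclicSpan f v i
    have : σ ((f ^ (i : ℕ)) v) (c + c') = 0 := hzo _ (mem_sup_left hxi)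
    rwa [map_add, cyclicSpan_le_orthogonal hchar hσ hf v hc _ hxi, zero_add] at this
  have hc : c = 0 := hpair.eq_zero_of_mem_span_left (hv_span ▸ hc) fun j => by
    have : σ ((f ^ (j : ℕ)) w) (c + c') = 0 :=
      hzo _ (mem_sup_right (pow_apply_mem_cyclicSpan f w j))
    rw [hc', add_zero] at this
    exact hσ.isRefl _ _ this
  rw [hc, hc', add_zero]

theorem exists_disjoint_cyclicSpan_sup_orthogonal [Nontrivial V] (hchar : (2 : K) ≠ 0)
    (hσ : σ.IsAlt) (hnd : σ.Nondegenerate) (hf : σ.IsSelfAdjoint f) :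
    ∃ v w : V, 0 < finrank K (cyclicSpan f v) ∧ Disjoint (cyclicSpan f v ⊔ cyclicSpan f w)
      (σ.orthogonal (cyclicSpan f v ⊔ cyclicSpan f w)) := by
  obtain ⟨v, hv⟩ := exists_forall_finrank_cyclicSpan_le f
  obtain ⟨u, hu⟩ := exists_ne (0 : V)
  have hd := (finrank_cyclicSpan_pos hu).trans_le (hv u)
  obtain ⟨w, hpair⟩ := exists_isAntitriangularPairing_pow_apply hnd hf hd
  exact ⟨v, w, hd, disjoint_cyclicSpan_sup_orthogonal hchar hσ hf le_rfl (hv w) hpair⟩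

theorem nondegenerate_restrict_orthogonal (hσ : σ.IsRefl) (hnd : σ.Nondegenerate)
    {W : Submodule K V} (hW : Disjoint W (σ.orthogonal W)) :
    (σ.restrict (σ.orthogonal W)).Nondegenerate :=
  σ.nondegenerate_restrict_of_disjoint_orthogonal hσ <| by
    rwa [LinearMap.BilinForm.orthogonal_orthogonal hnd hσ, disjoint_comm]

theorem exists_isInvariantIsotropicPair_sup_eq_top (hchar : (2 : K) ≠ 0) (hσ : σ.IsAlt)
    (hnd : σ.Nondegenerate) (hf : σ.IsSelfAdjoint f) :
    ∃ L L' : Submodule K V, IsInvariantIsotropicPair σ f L L' ∧ L ⊔ L' = ⊤ := by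
  induction hN : finrank K V using Nat.strong_induction_on generalizing V with
  | _ N ih =>
    cases subsingleton_or_nontrivial V
    · exact ⟨⊥, ⊥, .bot, Subsingleton.elim _ _⟩
    obtain ⟨v, w, hd, hdisj⟩ := exists_disjoint_cyclicSpan_sup_orthogonal hchar hσ hnd hf
    set W := cyclicSpan f v ⊔ cyclicSpan f w
    set O := σ.orthogonal W
    have hWO : IsCompl W O :=
      (LinearMap.BilinForm.isCompl_orthogonal_iff_disjoint hσ.isRefl).2 hdisj
    have hO : O ∈ f.invtSubmodule := orthogonal_mem_invtSubmodule hf <|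
      Module.End.invtSubmodule.sup_mem (cyclicSpan_mem_invtSubmodule f v)
        (cyclicSpan_mem_invtSubmodule f w)
    have hOnd := nondegenerate_restrict_orthogonal hσ.isRefl hnd hdisj
    have hOrank : finrank K O < N := by
      have := Submodule.finrank_add_eq_of_isCompl hWO
      have : 0 < finrank K W := hd.trans_le (Submodule.finrank_mono le_sup_left)
      omega
    have hOalt : (σ.restrict O).IsAlt := fun x => hσ x
    have hOsa : (σ.restrict O).IsSelfAdjoint (f.restrict hO : Module.End K O) :=
      fun x y => hf x y
    obtain ⟨L₀, L₀', hL₀, hL₀top⟩ := ih _ hOrank hOalt hOnd hOsa rfl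
    have hcyc := IsInvariantIsotropicPair.of_disjoint_orthogonal
      (cyclicSpan_mem_invtSubmodule f v) (cyclicSpan_mem_invtSubmodule f w)
      (cyclicSpan_le_orthogonal hchar hσ hf v) (cyclicSpan_le_orthogonal hchar hσ hf w) hdisj
    have hmap : L₀.map O.subtype ⊔ L₀'.map O.subtype = O := by
      rw [← Submodule.map_sup, hL₀top, Submodule.map_top, range_subtype]
    refine ⟨_, _,
      hcyc.sup hσ.isRefl (hL₀.map_subtype hO) (hmap.symm ▸ hWO.disjoint) hmap.le, ?_⟩
    rw [sup_sup_sup_comm, hmap]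
    exact hWO.sup_eq_top

section Polarization

variable {L L' : Submodule K V}

theorem finrank_eq_of_isCompl_of_le_orthogonal (hσ : σ.SeparatingLeft) (hLL' : IsCompl L L')
    (hL : L ≤ σ.orthogonal L) (hL' : L' ≤ σ.orthogonal L') : finrank K L' = finrank K L :=
  le_antisymm
    ((LinearMap.finrank_le_finrank_of_injective
      (injective_domRestrict₁₂_of_isCompl hσ hLL' hL')).trans_eq Subspace.dual_finrank_eq)
    ((LinearMap.finrank_le_finrank_of_injective
      (injective_domRestrict₁₂_of_isCompl hσ hLL'.symm hL)).trans_eq Subspace.dual_finrank_eq)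

theorem IsInvariantIsotropicPair.exists_linearEquiv_prod_dual (hσ : σ.IsAlt)
    (hnd : σ.Nondegenerate) (hf : σ.IsSelfAdjoint f) (h : IsInvariantIsotropicPair σ f L L')
    (htop : L ⊔ L' = ⊤) :
    ∃ Φ : (L × Module.Dual K L) ≃ₗ[K] V,
      (∀ x y, σ (Φ x) (Φ y) = omegaForm K L x y) ∧
      ∀ x, Φ (f.restrict h.left_mem_invtSubmodule x.1,
        (f.restrict h.left_mem_invtSubmodule).dualMap x.2) = f (Φ x) := by
  have hLL' : IsCompl L L' := ⟨h.disjoint, codisjoint_iff.2 htop⟩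
  set e : L' ≃ₗ[K] Module.Dual K L := LinearMap.linearEquivOfInjective _
    (injective_domRestrict₁₂_of_isCompl hnd.1 hLL' h.right_le_orthogonal)
    ((finrank_eq_of_isCompl_of_le_orthogonal hnd.1 hLL' h.left_le_orthogonal
      h.right_le_orthogonal).trans Subspace.dual_finrank_eq.symm)
  have he : ∀ μ (x : L), σ (e.symm μ) x = μ x := fun μ x =>
    LinearMap.congr_fun (e.apply_symm_apply μ) x
  have he_comm : ∀ μ, e.symm ((f.restrict h.left_mem_invtSubmodule).dualMap μ) =
      f.restrict h.right_mem_invtSubmodule (e.symm μ) := fun μ => by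
    refine e.symm_apply_eq.2 (LinearMap.ext fun x => ?_)
    change μ (f.restrict h.left_mem_invtSubmodule x) = σ (f (e.symm μ)) x
    rw [hf, ← he]
    rfl
  refine ⟨(LinearEquiv.refl K L).prodCongr e.symm ≪≫ₗ prodEquivOfIsCompl L L' hLL',
    ?_, ?_⟩
  · rintro ⟨u, μ⟩ ⟨u', μ'⟩
    simp only [LinearEquiv.trans_apply, LinearEquiv.prodCongr_apply, LinearEquiv.refl_apply,
      coe_prodEquivOfIsCompl', map_add, LinearMap.add_apply]
    rw [h.left_le_orthogonal u'.2 u u.2, h.right_le_orthogonal (e.symm μ').2 _ (e.symm μ).2,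
      ← hσ.neg_eq (e.symm μ' : V) u, he, he]
    simp [omegaForm, sub_eq_add_neg]
  · rintro ⟨u, μ⟩
    simp only [LinearEquiv.trans_apply, LinearEquiv.prodCongr_apply, LinearEquiv.refl_apply,
      coe_prodEquivOfIsCompl', map_add, he_comm]
    rfl

end Polarization

end Field

theorem symplectic_spectral_polarization_general
    {K V : Type*} [Field K] [AddCommGroup V] [Module K V]
    [FiniteDimensional K V]
    (hchar : (2 : K) ≠ 0) (n : ℕ)
    (hdim : Module.finrank K V = 2 * n)
    (σ : LinearMap.BilinForm K V) (halt : ∀ v, σ v v = 0) (hnd : σ.Nondegenerate)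
    (f : Module.End K V) (hsa : ∀ v w, σ v (f w) = σ (f v) w) :
    ∃ U : Submodule K V, Module.finrank K U = n ∧
      ∃ Φ : (U × Module.Dual K U) ≃ₗ[K] V,
        (∀ x y : U × Module.Dual K U, σ (Φ x) (Φ y) = omegaForm K U x y) ∧
        ∃ l : U →ₗ[K] U,
          ∀ x : U × Module.Dual K U, Φ (l x.1, l.dualMap x.2) = f (Φ x) := by
  have hf : σ.IsSelfAdjoint f := fun v w => (hsa v w).symm
  obtain ⟨L, L', h, htop⟩ := exists_isInvariantIsotropicPair_sup_eq_top hchar halt hnd hf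
  have hLL' : IsCompl L L' := ⟨h.disjoint, codisjoint_iff.2 htop⟩
  have hfinrank := finrank_eq_of_isCompl_of_le_orthogonal hnd.1 hLL' h.left_le_orthogonal
    h.right_le_orthogonal
  have hsum := Submodule.finrank_add_eq_of_isCompl hLL'
  obtain ⟨Φ, hΦσ, hΦf⟩ := h.exists_linearEquiv_prod_dual halt hnd hf htop
  exact ⟨L, by omega, Φ, hΦσ, _, hΦf⟩

theorem symplectic_spectral_polarization
    {K V : Type*} [Field K] [PerfectField K] [AddCommGroup V] [Module K V]
    [FiniteDimensional K V]
    (hchar : (2 : K) ≠ 0) (n : ℕ) (hn : 0 < n)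
    (hdim : Module.finrank K V = 2 * n)
    (σ : LinearMap.BilinForm K V) (halt : ∀ v, σ v v = 0) (hnd : σ.Nondegenerate)
    (f : Module.End K V) (hsa : ∀ v w, σ v (f w) = σ (f v) w) :
    ∃ U : Submodule K V, Module.finrank K U = n ∧
      ∃ Φ : (U × Module.Dual K U) ≃ₗ[K] V,
        (∀ x y : U × Module.Dual K U, σ (Φ x) (Φ y) = omegaForm K U x y) ∧
        ∃ l : U →ₗ[K] U,
          ∀ x : U × Module.Dual K U, Φ (l x.1, l.dualMap x.2) = f (Φ x) :=
  symplectic_spectral_polarization_general hchar n hdim σ halt hnd f hsa
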